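/- Let C be an abelian category. The category C_Q of objects up to isogeny is canonically equivalent to the quotient category of C by the Serre (thick) subcategory of objects of finite exponent, i.e. objects M such that n·id_M = 0 for some nonzero integer n. -/

import Mathlib

open CategoryTheory TensorProduct

universe v u

variable (C : Type u) [Category.{v} C] [Preadditive C]

/-- Isogenies in an additive category: morphisms `u : M ⟶ N` admitting `v : N ⟶ M`
and a nonzero integer `n` with `v∘u = n·id_M` and `u∘v = n·id_N`. -/
def Isogenies : CategoryTheory.MorphismProperty C :=
  fun M N u => ∃ (v : N ⟶ M) (n : ℤ), n ≠ 0 ∧ u ≫ v = n • 𝟙 M ∧ v ≫ u = n • 𝟙 N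

/-- The category `C_ℚ` of objects of `C` up to isogeny: same objects,
morphisms `Hom(E,F) ⊗_ℤ ℚ`. -/
structure CQ where
  /-- the underlying object -/
  obj : C

variable {C}

/-- Composition, bilinear over the pure-tensor formula `(f⊗q) ≫ (g⊗r) = (f≫g)⊗(qr)`. -/
noncomputable def CQ.comp {X Y Z : CQ C}
    (x : (X.obj ⟶ Y.obj) ⊗[ℤ] ℚ) (y : (Y.obj ⟶ Z.obj) ⊗[ℤ] ℚ) :
    (X.obj ⟶ Z.obj) ⊗[ℤ] ℚ :=
  (TensorProduct.map
      (TensorProduct.lift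
        { toFun := fun f =>
            { toFun := fun g => f ≫ g
              map_add' := fun g g' => Preadditive.comp_add _ _ _ _ _ _
              map_smul' := fun n g => by simp }
          map_add' := fun f f' => by ext g; simp [Preadditive.add_comp]
          map_smul' := fun n f => by ext g; simp })
      (LinearMap.mul' ℤ ℚ))
    ((TensorProduct.tensorTensorTensorComm ℤ (X.obj ⟶ Y.obj) ℚ (Y.obj ⟶ Z.obj) ℚ)
      (x ⊗ₜ y))

theorem CQ.comp_zero_left {X Y Z : CQ C} (y : (Y.obj ⟶ Z.obj) ⊗[ℤ] ℚ) :
    CQ.comp (X := X) (0 : (X.obj ⟶ Y.obj) ⊗[ℤ] ℚ) y = 0 := by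
  simp [CQ.comp]

theorem CQ.comp_zero_right {X Y Z : CQ C} (x : (X.obj ⟶ Y.obj) ⊗[ℤ] ℚ) :
    CQ.comp (Z := Z) x (0 : (Y.obj ⟶ Z.obj) ⊗[ℤ] ℚ) = 0 := by
  simp [CQ.comp]

theorem CQ.comp_add_left {X Y Z : CQ C} (a b : (X.obj ⟶ Y.obj) ⊗[ℤ] ℚ)
    (y : (Y.obj ⟶ Z.obj) ⊗[ℤ] ℚ) :
    CQ.comp (a + b) y = CQ.comp a y + CQ.comp b y := by
  simp [CQ.comp, add_tmul]

theorem CQ.comp_add_right {X Y Z : CQ C} (x : (X.obj ⟶ Y.obj) ⊗[ℤ] ℚ)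
    (a b : (Y.obj ⟶ Z.obj) ⊗[ℤ] ℚ) :
    CQ.comp (x) (a + b) = CQ.comp x a + CQ.comp x b := by
  simp [CQ.comp, tmul_add]

theorem CQ.comp_tmul {X Y Z : CQ C} (f : X.obj ⟶ Y.obj) (q : ℚ)
    (g : Y.obj ⟶ Z.obj) (r : ℚ) :
    CQ.comp (f ⊗ₜ q) (g ⊗ₜ r) = (f ≫ g) ⊗ₜ[ℤ] (q * r) := by
  simp [CQ.comp]

noncomputable instance : Category (CQ C) where
  Hom X Y := (X.obj ⟶ Y.obj) ⊗[ℤ] ℚ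
  id X := 𝟙 X.obj ⊗ₜ (1 : ℚ)
  comp := CQ.comp
  id_comp := by
    intro X Y f
    show CQ.comp _ _ = _
    induction f using TensorProduct.induction_on with
    | zero => simp [CQ.comp]
    | tmul g r => simp [CQ.comp]
    | add a b ha hb =>
      rw [CQ.comp_add_right, ha, hb]
  comp_id := by
    intro X Y f
    show CQ.comp _ _ = _
    induction f using TensorProduct.induction_on with
    | zero => simp [CQ.comp]
    | tmul g r => simp [CQ.comp]
    | add a b ha hb =>
      rw [CQ.comp_add_left, ha, hb]
  assoc := by
    intro W X Y Z f g h
    show CQ.comp (CQ.comp f g) h = CQ.comp f (CQ.comp g h)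
    induction f using TensorProduct.induction_on with
    | zero => rw [CQ.comp_zero_left, CQ.comp_zero_left, CQ.comp_zero_left]
    | add a b ha hb =>
      rw [CQ.comp_add_left, CQ.comp_add_left, CQ.comp_add_left, ha, hb]
    | tmul f q =>
      induction g using TensorProduct.induction_on with
      | zero => rw [CQ.comp_zero_right, CQ.comp_zero_left, CQ.comp_zero_left,
          CQ.comp_zero_right]
      | add a b ha hb =>
        rw [CQ.comp_add_right, CQ.comp_add_left, CQ.comp_add_left, ha, hb,
          CQ.comp_add_right]
      | tmul g r =>
        induction h using TensorProduct.induction_on with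
        | zero => rw [CQ.comp_zero_right, CQ.comp_zero_right, CQ.comp_zero_right]
        | add a b ha hb =>
          rw [CQ.comp_add_right, CQ.comp_add_right, ha, hb, CQ.comp_add_right]
        | tmul h s =>
          rw [CQ.comp_tmul, CQ.comp_tmul, CQ.comp_tmul, CQ.comp_tmul,
            Category.assoc, mul_assoc]

/-- The localization functor `C ⥤ C_ℚ`. -/
noncomputable def QFunctor (C : Type u) [Category.{v} C] [Preadditive C] :
    C ⥤ CQ C where
  obj X := ⟨X⟩
  map f := f ⊗ₜ (1 : ℚ)
  map_id X := rfl
  map_comp := by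
    intro X Y Z f g
    show _ = CQ.comp _ _
    simp [CQ.comp]

/-!
STATEMENT 2: For an abelian category `C`, the category `C_ℚ` is canonically
equivalent to the quotient of `C` by the Serre subcategory of objects of finite
exponent (objects `M` with `n·id_M = 0` for some nonzero integer `n`).
The quotient of an abelian category by a Serre subcategory is its localization
at the class of morphisms whose kernel and cokernel lie in the subcategory;
accordingly, the statement is formalized as: the canonical functor `C ⥤ C_ℚ`
is the localization of `C` at the class of morphisms whose kernel and cokernel
have finite exponent.
-/

/-- An object has finite exponent if it is killed by a nonzero integer. -/
def HasFiniteExponent {C : Type u} [Category.{v} C] [Preadditive C] (M : C) :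
    Prop :=
  ∃ n : ℤ, n ≠ 0 ∧ (n • 𝟙 M : M ⟶ M) = 0

/-!
Every morphism `x` of `C_ℚ` is a fraction: `x ≫ Q (n • 𝟙) = Q m` for some `n ≠ 0`, and
`Q m = Q m'` only if `k • m = k • m'` for some `k ≠ 0`, because `M ⊗[ℤ] ℚ` is the localization
of the abelian group `M` at the nonzero integers. A functor `F` inverting the isogenies inverts
every `n • 𝟙`, so `x` can only go to `F m ≫ (F (n • 𝟙))⁻¹`, and the torsion description of
`Q m = Q m'` makes this independent of the fraction. Hence `C_ℚ` is the localization of any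
preadditive category at its isogenies. In an abelian category these are exactly the morphisms
whose kernel and cokernel have finite exponent: factor `f` as an epimorphism `p` followed by a
monomorphism `i`; if `a` kills `kernel f` then `a • 𝟙` factors through `p`, and if `b` kills
`cokernel f` then `b • 𝟙` factors through `i`.
-/

open Limits

section RationalTensor

variable {M : Type*} [AddCommGroup M]

lemma zsmul_tmul_inv_intCast (m : M) {n : ℤ} (hn : n ≠ 0) :
    (n • m) ⊗ₜ[ℤ] (n : ℚ)⁻¹ = m ⊗ₜ 1 := by
  rw [smul_tmul, zsmul_eq_mul, mul_inv_cancel₀ (Int.cast_ne_zero.2 hn)]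

instance isLocalizedModule_tmul_one :
    IsLocalizedModule (nonZeroDivisors ℤ)
      ((TensorProduct.comm ℤ ℚ M).toLinearMap ∘ₗ TensorProduct.mk ℤ ℚ M 1) :=
  have := (isLocalizedModule_iff_isBaseChange (nonZeroDivisors ℤ) ℚ _).2
    (TensorProduct.isBaseChange ℤ M ℚ)
  inferInstance

lemma exists_zsmul_eq_tmul_one (x : M ⊗[ℤ] ℚ) :
    ∃ n : ℤ, n ≠ 0 ∧ ∃ m : M, n • x = m ⊗ₜ 1 := by
  obtain ⟨⟨m, n⟩, h⟩ := IsLocalizedModule.surj (nonZeroDivisors ℤ)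
    ((TensorProduct.comm ℤ ℚ M).toLinearMap ∘ₗ TensorProduct.mk ℤ ℚ M 1) x
  exact ⟨n, nonZeroDivisors.coe_ne_zero n, m, h⟩

lemma exists_zsmul_eq_zsmul_of_tmul_one_eq {m m' : M} (h : m ⊗ₜ[ℤ] (1 : ℚ) = m' ⊗ₜ 1) :
    ∃ k : ℤ, k ≠ 0 ∧ k • m = k • m' := by
  obtain ⟨k, hk⟩ := IsLocalizedModule.exists_of_eq (S := nonZeroDivisors ℤ)
    (f := (TensorProduct.comm ℤ ℚ M).toLinearMap ∘ₗ TensorProduct.mk ℤ ℚ M 1) h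
  exact ⟨k, nonZeroDivisors.coe_ne_zero k, hk⟩

end RationalTensor

namespace CategoryTheory.Functor

variable {D : Type*} [Category D] (F : C ⥤ D) {X Y Z : C}

lemma map_zsmul_id_comp (n : ℤ) (f : X ⟶ Y) : F.map (n • 𝟙 X) ≫ F.map f = F.map (n • f) := by
  rw [← F.map_comp, Preadditive.zsmul_comp, Category.id_comp]

lemma map_comp_zsmul_id (n : ℤ) (f : X ⟶ Y) : F.map f ≫ F.map (n • 𝟙 Y) = F.map (n • f) := by
  rw [← F.map_comp, Preadditive.comp_zsmul, Category.comp_id]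

lemma map_mul_zsmul_id (a b : ℤ) (X : C) :
    F.map ((a * b) • 𝟙 X) = F.map (a • 𝟙 X) ≫ F.map (b • 𝟙 X) := by
  rw [map_zsmul_id_comp, mul_smul]

lemma comp_comp_map_mul_zsmul_id {a : F.obj X ⟶ F.obj Y} {b : F.obj Y ⟶ F.obj Z}
    {n n' : ℤ} {m : X ⟶ Y} {m' : Y ⟶ Z} (ha : a ≫ F.map (n • 𝟙 Y) = F.map m)
    (hb : b ≫ F.map (n' • 𝟙 Z) = F.map m') :
    (a ≫ b) ≫ F.map ((n' * n) • 𝟙 Z) = F.map (m ≫ m') := by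
  rw [map_mul_zsmul_id, Category.assoc, reassoc_of% hb, map_comp_zsmul_id, ← map_zsmul_id_comp,
    reassoc_of% ha, F.map_comp]

end CategoryTheory.Functor

section Isogenies

variable {X Y : C}

lemma zsmul_eq_zero_of_zsmul_id_source {n : ℤ} (h : n • 𝟙 X = 0) (g : X ⟶ Y) : n • g = 0 := by
  rw [← Category.id_comp g, ← Preadditive.zsmul_comp, h, zero_comp]

lemma zsmul_eq_zero_of_zsmul_id_target {n : ℤ} (h : n • 𝟙 Y = 0) (g : X ⟶ Y) : n • g = 0 := by
  rw [← Category.comp_id g, ← Preadditive.comp_zsmul, h, comp_zero]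

lemma zsmul_id_mem_isogenies (X : C) {n : ℤ} (hn : n ≠ 0) : Isogenies C (n • 𝟙 X) :=
  ⟨𝟙 X, n, hn, by simp, by simp⟩

instance : (Isogenies C).IsStableUnderComposition where
  comp_mem f g := by
    rintro ⟨f', a, ha, hff', hf'f⟩ ⟨g', b, hb, hgg', hg'g⟩
    refine ⟨g' ≫ f', a * b, mul_ne_zero ha hb, ?_, ?_⟩
    · simp [reassoc_of% hgg', hff', smul_smul, mul_comm]
    · simp [reassoc_of% hf'f, hg'g, smul_smul]

lemma isogenies_isInvertedBy_QFunctor : (Isogenies C).IsInvertedBy (QFunctor C) := by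
  rintro X Y f ⟨g, n, hn, hfg, hgf⟩
  refine ⟨⟨(g ⊗ₜ[ℤ] (n : ℚ)⁻¹ : (Y ⟶ X) ⊗[ℤ] ℚ), ?_, ?_⟩⟩
  · show CQ.comp (f ⊗ₜ[ℤ] (1 : ℚ)) (g ⊗ₜ[ℤ] (n : ℚ)⁻¹) = 𝟙 X ⊗ₜ[ℤ] (1 : ℚ)
    rw [CQ.comp_tmul, hfg, one_mul, zsmul_tmul_inv_intCast _ hn]
  · show CQ.comp (g ⊗ₜ[ℤ] (n : ℚ)⁻¹) (f ⊗ₜ[ℤ] (1 : ℚ)) = 𝟙 Y ⊗ₜ[ℤ] (1 : ℚ)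
    rw [CQ.comp_tmul, hgf, mul_one, zsmul_tmul_inv_intCast _ hn]

lemma hasFiniteExponent_kernel_of_isogenies {f : X ⟶ Y} [HasKernel f] (hf : Isogenies C f) :
    HasFiniteExponent (kernel f) := by
  obtain ⟨g, n, hn, hfg, -⟩ := hf
  refine ⟨n, hn, ?_⟩
  rw [← cancel_mono (kernel.ι f), zero_comp]
  calc (n • 𝟙 (kernel f)) ≫ kernel.ι f = kernel.ι f ≫ f ≫ g := by simp [hfg]
    _ = 0 := by rw [kernel.condition_assoc, zero_comp]

lemma hasFiniteExponent_cokernel_of_isogenies {f : X ⟶ Y} [HasCokernel f]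
    (hf : Isogenies C f) : HasFiniteExponent (cokernel f) := by
  obtain ⟨g, n, hn, -, hgf⟩ := hf
  refine ⟨n, hn, ?_⟩
  rw [← cancel_epi (cokernel.π f), comp_zero]
  calc cokernel.π f ≫ (n • 𝟙 (cokernel f)) = (g ≫ f) ≫ cokernel.π f := by simp [hgf]
    _ = 0 := by rw [Category.assoc, cokernel.condition, comp_zero]

end Isogenies

namespace CQ

lemma comp_zsmul_right {X Y Z : CQ C} (x : (X.obj ⟶ Y.obj) ⊗[ℤ] ℚ) (n : ℤ)
    (y : (Y.obj ⟶ Z.obj) ⊗[ℤ] ℚ) : CQ.comp x (n • y) = n • CQ.comp x y := by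
  rw [CQ.comp, CQ.comp, tmul_smul, LinearEquiv.map_smul, LinearMap.map_smul]

lemma comp_zsmul_id_tmul_one {X Y : CQ C} (x : (X.obj ⟶ Y.obj) ⊗[ℤ] ℚ) (n : ℤ) :
    CQ.comp x ((n • 𝟙 Y.obj) ⊗ₜ[ℤ] (1 : ℚ)) = n • x := by
  rw [← smul_tmul', comp_zsmul_right]
  exact congrArg (n • ·) (Category.comp_id (X := X) x)

variable {X Y : C}

lemma exists_comp_map_zsmul_id_eq_map (x : (QFunctor C).obj X ⟶ (QFunctor C).obj Y) :
    ∃ n : ℤ, n ≠ 0 ∧ ∃ m : X ⟶ Y, x ≫ (QFunctor C).map (n • 𝟙 Y) = (QFunctor C).map m := by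
  obtain ⟨n, hn, m, h⟩ := exists_zsmul_eq_tmul_one (M := X ⟶ Y) x
  exact ⟨n, hn, m, (comp_zsmul_id_tmul_one x n).trans h⟩

lemma exists_zsmul_eq_zsmul_of_map_eq {m m' : X ⟶ Y}
    (h : (QFunctor C).map m = (QFunctor C).map m') : ∃ k : ℤ, k ≠ 0 ∧ k • m = k • m' :=
  exists_zsmul_eq_zsmul_of_tmul_one_eq h

section Lift

variable {E : Type*} [Category E] (F : C ⥤ E)

lemma isIso_map_zsmul_id (hF : (Isogenies C).IsInvertedBy F) (X : C) {n : ℤ} (hn : n ≠ 0) :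
    IsIso (F.map (n • 𝟙 X)) :=
  hF _ (zsmul_id_mem_isogenies X hn)

lemma exists_lift (hF : (Isogenies C).IsInvertedBy F)
    (x : (QFunctor C).obj X ⟶ (QFunctor C).obj Y) :
    ∃ g : F.obj X ⟶ F.obj Y, ∀ (n : ℤ) (m : X ⟶ Y), n ≠ 0 →
      x ≫ (QFunctor C).map (n • 𝟙 Y) = (QFunctor C).map m → g ≫ F.map (n • 𝟙 Y) = F.map m := by
  obtain ⟨n₀, hn₀, m₀, hx₀⟩ := exists_comp_map_zsmul_id_eq_map x
  have := isIso_map_zsmul_id F hF Y hn₀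
  refine ⟨F.map m₀ ≫ inv (F.map (n₀ • 𝟙 Y)), fun n m hn hx => ?_⟩
  -- both sides are `x ≫ Q ((n * n₀) • 𝟙)`
  have hQ : (QFunctor C).map (n • m₀) = (QFunctor C).map (n₀ • m) := by
    rw [← (QFunctor C).map_comp_zsmul_id n m₀, ← (QFunctor C).map_comp_zsmul_id n₀ m, ← hx₀, ← hx,
      Category.assoc, Category.assoc, Functor.map_zsmul_id_comp, Functor.map_zsmul_id_comp,
      smul_comm]
  obtain ⟨k, hk, hkm⟩ := exists_zsmul_eq_zsmul_of_map_eq hQ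
  have := isIso_map_zsmul_id F hF Y (mul_ne_zero hk hn₀)
  rw [← cancel_mono (F.map ((k * n₀) • 𝟙 Y)), Category.assoc]
  calc (F.map m₀ ≫ inv (F.map (n₀ • 𝟙 Y))) ≫ F.map (n • 𝟙 Y) ≫ F.map ((k * n₀) • 𝟙 Y)
      = (F.map m₀ ≫ inv (F.map (n₀ • 𝟙 Y))) ≫ F.map (n₀ • 𝟙 Y) ≫ F.map ((k * n) • 𝟙 Y) := by
        rw [← F.map_mul_zsmul_id, ← F.map_mul_zsmul_id, show n * (k * n₀) = n₀ * (k * n) by ring]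
    _ = F.map (k • n • m₀) := by
        rw [Category.assoc, IsIso.inv_hom_id_assoc, F.map_comp_zsmul_id, mul_smul]
    _ = F.map m ≫ F.map ((k * n₀) • 𝟙 Y) := by
        rw [hkm, F.map_comp_zsmul_id, mul_smul]

noncomputable def liftMap (hF : (Isogenies C).IsInvertedBy F)
    (x : (QFunctor C).obj X ⟶ (QFunctor C).obj Y) : F.obj X ⟶ F.obj Y :=
  (exists_lift F hF x).choose

lemma liftMap_comp_map_zsmul_id (hF : (Isogenies C).IsInvertedBy F)
    {x : (QFunctor C).obj X ⟶ (QFunctor C).obj Y} {n : ℤ} {m : X ⟶ Y} (hn : n ≠ 0)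
    (hx : x ≫ (QFunctor C).map (n • 𝟙 Y) = (QFunctor C).map m) :
    liftMap F hF x ≫ F.map (n • 𝟙 Y) = F.map m :=
  (exists_lift F hF x).choose_spec n m hn hx

lemma eq_liftMap (hF : (Isogenies C).IsInvertedBy F)
    {x : (QFunctor C).obj X ⟶ (QFunctor C).obj Y} {g : F.obj X ⟶ F.obj Y} {n : ℤ} {m : X ⟶ Y}
    (hn : n ≠ 0) (hx : x ≫ (QFunctor C).map (n • 𝟙 Y) = (QFunctor C).map m)
    (hg : g ≫ F.map (n • 𝟙 Y) = F.map m) : g = liftMap F hF x := by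
  have := isIso_map_zsmul_id F hF Y hn
  rw [← cancel_mono (F.map (n • 𝟙 Y)), hg, liftMap_comp_map_zsmul_id F hF hn hx]

lemma liftMap_map (hF : (Isogenies C).IsInvertedBy F) (f : X ⟶ Y) :
    liftMap F hF ((QFunctor C).map f) = F.map f :=
  (eq_liftMap F hF (m := f) one_ne_zero (by simp) (by simp)).symm

noncomputable def liftFunctor (hF : (Isogenies C).IsInvertedBy F) : CQ C ⥤ E where
  obj X := F.obj X.obj
  map x := liftMap F hF x
  map_id X := (liftMap_map F hF (𝟙 X.obj)).trans (F.map_id _)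
  map_comp {X Y Z} x y := by
    obtain ⟨n, hn, m, hx⟩ := exists_comp_map_zsmul_id_eq_map x
    obtain ⟨n', hn', m', hy⟩ := exists_comp_map_zsmul_id_eq_map y
    exact (eq_liftMap F hF (mul_ne_zero hn' hn) ((QFunctor C).comp_comp_map_mul_zsmul_id hx hy)
      (F.comp_comp_map_mul_zsmul_id (liftMap_comp_map_zsmul_id F hF hn hx)
        (liftMap_comp_map_zsmul_id F hF hn' hy))).symm

lemma eq_liftFunctor (G : CQ C ⥤ E) :
    G = liftFunctor (QFunctor C ⋙ G) (isogenies_isInvertedBy_QFunctor.of_comp _ _ G) := by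
  set hG := isogenies_isInvertedBy_QFunctor.of_comp _ _ G
  refine CategoryTheory.Functor.ext (fun _ => rfl) fun X Y x => ?_
  obtain ⟨n, hn, m, hx⟩ := exists_comp_map_zsmul_id_eq_map x
  change G.map x = 𝟙 _ ≫ liftMap (QFunctor C ⋙ G) hG x ≫ 𝟙 _
  rw [Category.id_comp, Category.comp_id]
  exact eq_liftMap _ hG hn hx ((G.map_comp x _).symm.trans (congrArg G.map hx))

end Lift

noncomputable def strictUniversalPropertyFixedTarget (E : Type*) [Category E] :
    Localization.StrictUniversalPropertyFixedTarget (QFunctor C) (Isogenies C) E where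
  inverts := isogenies_isInvertedBy_QFunctor
  lift := liftFunctor
  fac F hF := CategoryTheory.Functor.ext (fun _ => rfl) fun X Y f => by
    change liftMap F hF ((QFunctor C).map f) = 𝟙 _ ≫ F.map f ≫ 𝟙 _
    rw [Category.id_comp, Category.comp_id, liftMap_map]
  uniq G₁ G₂ h := by
    rw [eq_liftFunctor G₁, eq_liftFunctor G₂]
    congr 1

theorem isLocalization_isogenies : (QFunctor C).IsLocalization (Isogenies C) :=
  Functor.IsLocalization.mk' _ _ (strictUniversalPropertyFixedTarget _)
    (strictUniversalPropertyFixedTarget _)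

end CQ

section Abelian

variable {C : Type u} [Category.{v} C] [Abelian C] {X Y I : C}

lemma isogenies_of_epi (p : X ⟶ I) [Epi p] {a : ℤ} (ha : a ≠ 0) (hp : a • kernel.ι p = 0) :
    Isogenies C p := by
  let s := Abelian.epiDesc p (a • 𝟙 X) (by rw [Preadditive.comp_zsmul, Category.comp_id, hp])
  have hps : p ≫ s = a • 𝟙 X := Abelian.comp_epiDesc _ _ _
  refine ⟨s, a, ha, hps, ?_⟩
  rw [← cancel_epi p, reassoc_of% hps]
  simp

lemma isogenies_of_mono (i : I ⟶ Y) [Mono i] {b : ℤ} (hb : b ≠ 0) (hi : b • cokernel.π i = 0) :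
    Isogenies C i := by
  let t := Abelian.monoLift i (b • 𝟙 Y) (by rw [Preadditive.zsmul_comp, Category.id_comp, hi])
  have hti : t ≫ i = b • 𝟙 Y := Abelian.monoLift_comp _ _ _
  refine ⟨t, b, hb, ?_, hti⟩
  rw [← cancel_mono i, Category.assoc, hti]
  simp

lemma isogenies_of_hasFiniteExponent (f : X ⟶ Y) (hker : HasFiniteExponent (kernel f))
    (hcoker : HasFiniteExponent (cokernel f)) : Isogenies C f := by
  obtain ⟨I, p, i, _, _, rfl⟩ : ∃ (I : C) (p : X ⟶ I) (i : I ⟶ Y), Epi p ∧ Mono i ∧ p ≫ i = f :=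
    ⟨_, _, _, inferInstance, inferInstance, Abelian.coimage.fac f⟩
  obtain ⟨a, ha, hka⟩ := hker
  obtain ⟨b, hb, hkb⟩ := hcoker
  refine (Isogenies C).comp_mem _ _ (isogenies_of_epi p ha ?_) (isogenies_of_mono i hb ?_)
  · rw [← kernel.lift_ι (p ≫ i) (kernel.ι p) (by simp), ← Preadditive.comp_zsmul,
      zsmul_eq_zero_of_zsmul_id_source hka, comp_zero]
  · rw [← cokernel.π_desc (p ≫ i) (cokernel.π i) (by simp), ← Preadditive.zsmul_comp,
      zsmul_eq_zero_of_zsmul_id_target hkb, zero_comp]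

variable (C) in
lemma isogenies_eq_hasFiniteExponent_kernel_cokernel :
    Isogenies C =
      fun _ _ f => HasFiniteExponent (kernel f) ∧ HasFiniteExponent (cokernel f) := by
  ext X Y f
  exact ⟨fun hf => ⟨hasFiniteExponent_kernel_of_isogenies hf,
    hasFiniteExponent_cokernel_of_isogenies hf⟩, fun h => isogenies_of_hasFiniteExponent f h.1 h.2⟩

end Abelian

open Limits in
theorem statement2 (C : Type u) [Category.{v} C] [Abelian C] :
    (QFunctor C).IsLocalization
      (fun _ _ f => HasFiniteExponent (kernel f) ∧
        HasFiniteExponent (cokernel f) : MorphismProperty C) := by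
  rw [← isogenies_eq_hasFiniteExponent_kernel_cokernel]
  exact CQ.isLocalization_isogenies
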